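/- arXiv:2008.01643 — 2 statements merged into one kernel-verified Lean document; each statement's English description precedes it below -/
import Mathlib

section
/- Let f : X → Z, g : Y → Z, h : X → Y be continuous maps with f = g ∘ h. If f and h are Serre fibrations and h is surjective, then g is also a Serre fibration. -/
open unitInterval

/-- The closed `i`-dimensional disc `Dⁱ`. -/
abbrev Disc (i : ℕ) := (Metric.closedBall (0 : EuclideanSpace ℝ (Fin i)) 1 :
    Set (EuclideanSpace ℝ (Fin i)))

/-- A continuous map is a *Serre fibration* if it has the homotopy lifting property with
respect to the inclusions `Dⁱ × {0} ↪ Dⁱ × I` for all `i ≥ 0`. -/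
def IsSerreFibration {X Y : Type*} [TopologicalSpace X] [TopologicalSpace Y] (f : X → Y) : Prop :=
  Continuous f ∧
  ∀ (i : ℕ) (H : C(Disc i × I, Y)) (h₀ : C(Disc i, X)),
    (∀ d, f (h₀ d) = H (d, 0)) →
    ∃ H' : C(Disc i × I, X), (∀ p, f (H' p) = H p) ∧ (∀ d, H' (d, 0) = h₀ d)

/-- Scaling a point of the disc by `t ∈ I` stays in the disc. -/
lemma smul_mem_disc {i : ℕ} (t : I) (d : Disc i) :
    (t : ℝ) • (d : EuclideanSpace ℝ (Fin i)) ∈ Disc i := by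
  have hd : ‖(d : EuclideanSpace ℝ (Fin i))‖ ≤ 1 :=
    mem_closedBall_zero_iff.mp d.2
  have ht : |(t : ℝ)| ≤ 1 := by
    rw [abs_of_nonneg t.2.1]; exact t.2.2
  have : ‖(t : ℝ) • (d : EuclideanSpace ℝ (Fin i))‖ ≤ 1 := by
    rw [norm_smul]
    calc |(t : ℝ)| * ‖(d : EuclideanSpace ℝ (Fin i))‖ ≤ 1 * 1 := by
          exact mul_le_mul ht hd (norm_nonneg _) zero_le_one
      _ = 1 := one_mul 1
  exact mem_closedBall_zero_iff.mpr this

/-- Two-out-of-three for Serre fibrations: if `f = g ∘ h` with `f` and `h` Serre fibrations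
and `h` surjective, then `g` is a Serre fibration. -/
theorem serreFibration_of_comp {X Y Z : Type*} [TopologicalSpace X] [TopologicalSpace Y]
    [TopologicalSpace Z] (f : X → Z) (g : Y → Z) (h : X → Y)
    (hg_cont : Continuous g) (hcomp : f = g ∘ h)
    (hf : IsSerreFibration f) (hh : IsSerreFibration h)
    (hsurj : Function.Surjective h) :
    IsSerreFibration g := by
  obtain ⟨hf_cont, hf_lift⟩ := hf
  obtain ⟨hh_cont, hh_lift⟩ := hh
  refine ⟨hg_cont, ?_⟩
  intro i H h₀ hH0
  -- Step 1: lift `h₀` through `h`, using contractibility of the disc.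
  obtain ⟨x₀, hx₀⟩ := hsurj (h₀ ⟨0, by simp⟩)
  -- the contraction homotopy K(d,t) = h₀ (t • d)
  let K : C(Disc i × I, Y) :=
    ⟨fun p => h₀ ⟨(p.2 : ℝ) • (p.1 : EuclideanSpace ℝ (Fin i)), smul_mem_disc p.2 p.1⟩, by
      refine h₀.continuous.comp (Continuous.subtype_mk ?_ _)
      exact ((continuous_subtype_val.comp continuous_snd).smul
        (continuous_subtype_val.comp continuous_fst))⟩
  have hK0 : ∀ d : Disc i, h x₀ = K (d, 0) := by
    intro d
    have : ((0 : I) : ℝ) • (d : EuclideanSpace ℝ (Fin i)) = 0 := by simp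
    simp only [K, ContinuousMap.coe_mk]
    rw [hx₀]
    exact congrArg h₀ (Subtype.ext this.symm)
  obtain ⟨K', hK'lift, hK'0⟩ :=
    hh_lift i K ⟨fun _ => x₀, continuous_const⟩ (fun d => hK0 d)
  -- k : the lift of h₀ through h
  let k : C(Disc i, X) := ⟨fun d => K' (d, 1), K'.continuous.comp (continuous_id.prodMk continuous_const)⟩
  have hk : ∀ d, h (k d) = h₀ d := by
    intro d
    have := hK'lift (d, 1)
    simp only [K, ContinuousMap.coe_mk] at this
    have heq : (⟨((1 : I) : ℝ) • (d : EuclideanSpace ℝ (Fin i)), smul_mem_disc 1 d⟩ : Disc i)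
        = d := Subtype.ext (one_smul ℝ _)
    rw [heq] at this
    exact this
  -- Step 2: lift H through f with initial condition k
  have hk0 : ∀ d, f (k d) = H (d, 0) := by
    intro d
    rw [hcomp]; simp only [Function.comp_apply]
    rw [hk d]; exact hH0 d
  obtain ⟨H'', hH''lift, hH''0⟩ := hf_lift i H k hk0
  refine ⟨⟨fun p => h (H'' p), hh_cont.comp H''.continuous⟩, ?_, ?_⟩
  · intro p
    have := hH''lift p
    rw [hcomp] at this
    simpa using this
  · intro d
    simp only [ContinuousMap.coe_mk]
    rw [hH''0 d, hk d]
end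

section
/- Let G₂, G₃ be topological groups with free continuous actions on spaces M₂, M₃ such that the quotient maps pᵢ : Mᵢ → Mᵢ/Gᵢ are principal Gᵢ-bundles (in particular Serre fibrations). Let φ : G₂ → G₃ be a continuous group homomorphism and f : M₂ → M₃ a φ-equivariant Serre fibration. Then the induced map ψ : M₂/G₂ → M₃/G₃ on orbit spaces is a Serre fibration. -/
open unitInterval

/-!
`ψ ∘ p₂ = p₃ ∘ f` is a Serre fibration, being a composite of two. To lift a homotopy `H` of
discs through `ψ` starting at `h₀`, first lift `h₀` through `p₂` (possible because discs are
contractible and `p₂` is a surjective fibration), then lift `H` through `ψ ∘ p₂` and push the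
result down along `p₂`. Continuity of `ψ` comes from `p₂` being a quotient map.
-/

namespace IsSerreFibration

variable {X Y Z : Type*} [TopologicalSpace X] [TopologicalSpace Y] [TopologicalSpace Z]

theorem comp {p : X → Y} {q : Y → Z} (hq : IsSerreFibration q) (hp : IsSerreFibration p) :
    IsSerreFibration (q ∘ p) := by
  refine ⟨hq.1.comp hp.1, fun i H h₀ hh₀ => ?_⟩
  obtain ⟨Hq, hHq, hHq₀⟩ := hq.2 i H ⟨p ∘ h₀, hp.1.comp h₀.continuous⟩ hh₀
  obtain ⟨Hp, hHp, hHp₀⟩ := hp.2 i Hq h₀ fun d => (hHq₀ d).symm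
  exact ⟨Hp, fun x => by simp [hHp, hHq], hHp₀⟩

theorem exists_lift_of_surjective {p : X → Y} (hp : IsSerreFibration p)
    (hsurj : Function.Surjective p) {i : ℕ} (h : C(Disc i, Y)) :
    ∃ h' : C(Disc i, X), ∀ d, p (h' d) = h d := by
  have : ContractibleSpace (Disc i) :=
    (convex_closedBall _ _).contractibleSpace ⟨0, Metric.mem_closedBall_self zero_le_one⟩
  obtain ⟨d₀, ⟨F⟩⟩ := id_nullhomotopic (Disc i)
  -- `h` moved along a contraction of the disc: constant at `h d₀` for `t = 0`, `h` for `t = 1`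
  let H : C(Disc i × I, Y) := h.comp (F.symm.toContinuousMap.comp ContinuousMap.prodSwap)
  obtain ⟨x₀, hx₀⟩ := hsurj (h d₀)
  obtain ⟨H', hH', -⟩ := hp.2 i H (ContinuousMap.const _ x₀) fun d => by simp [H, hx₀]
  refine ⟨H'.comp ⟨fun d => (d, 1), by fun_prop⟩, fun d => ?_⟩
  simp [hH', H]

theorem of_comp_of_isQuotientMap {p : X → Y} {q : Y → Z} (hp : IsSerreFibration p)
    (hp_quot : Topology.IsQuotientMap p) (hqp : IsSerreFibration (q ∘ p)) :
    IsSerreFibration q := by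
  refine ⟨hp_quot.continuous_iff.mpr hqp.1, fun i H h₀ hh₀ => ?_⟩
  obtain ⟨h₀', hh₀'⟩ := hp.exists_lift_of_surjective hp_quot.surjective h₀
  obtain ⟨H', hH', hH'₀⟩ := hqp.2 i H h₀' fun d => by simp [hh₀', hh₀]
  exact ⟨⟨p ∘ H', hp.1.comp H'.continuous⟩, hH', fun d => by simp [hH'₀, hh₀']⟩

end IsSerreFibration

theorem serreFibration_of_descend_to_orbit_spaces_general
    {G₂ G₃ : Type*} [Group G₂] [Group G₃]
    {M₂ M₃ : Type*} [TopologicalSpace M₂] [TopologicalSpace M₃]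
    [MulAction G₂ M₂] [MulAction G₃ M₃]
    -- the quotient maps are principal bundles; in particular they are Serre fibrations
    (hp₂ : IsSerreFibration (Quotient.mk (MulAction.orbitRel G₂ M₂)))
    (hp₃ : IsSerreFibration (Quotient.mk (MulAction.orbitRel G₃ M₃)))
    (f : M₂ → M₃)
    (hf : IsSerreFibration f)
    (ψ : Quotient (MulAction.orbitRel G₂ M₂) → Quotient (MulAction.orbitRel G₃ M₃))
    (hψ : ∀ x : M₂, ψ (Quotient.mk (MulAction.orbitRel G₂ M₂) x) =
      Quotient.mk (MulAction.orbitRel G₃ M₃) (f x)) :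
    IsSerreFibration ψ := by
  have hψp₂ : IsSerreFibration (ψ ∘ Quotient.mk (MulAction.orbitRel G₂ M₂)) := by
    rw [show ψ ∘ Quotient.mk _ = Quotient.mk _ ∘ f from funext hψ]
    exact hp₃.comp hf
  exact hp₂.of_comp_of_isQuotientMap isQuotientMap_quot_mk hψp₂

/-- Lemma (descent of fibrations to orbit spaces): given free continuous actions of topological
groups `G₂`, `G₃` on `M₂`, `M₃` whose quotient maps are principal bundles (in particular Serre
fibrations), a continuous homomorphism `φ : G₂ → G₃` and a `φ`-equivariant Serre fibration
`f : M₂ → M₃`, the induced map `ψ : M₂/G₂ → M₃/G₃` is a Serre fibration. -/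
theorem serreFibration_of_descend_to_orbit_spaces
    {G₂ G₃ : Type*} [Group G₂] [Group G₃] [TopologicalSpace G₂] [TopologicalSpace G₃]
    [IsTopologicalGroup G₂] [IsTopologicalGroup G₃]
    {M₂ M₃ : Type*} [TopologicalSpace M₂] [TopologicalSpace M₃]
    [MulAction G₂ M₂] [MulAction G₃ M₃] [ContinuousSMul G₂ M₂] [ContinuousSMul G₃ M₃]
    -- the actions are free
    (hfree₂ : ∀ (g : G₂) (x : M₂), g • x = x → g = 1)
    (hfree₃ : ∀ (g : G₃) (x : M₃), g • x = x → g = 1)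
    -- the quotient maps are principal bundles; in particular they are Serre fibrations
    (hp₂ : IsSerreFibration (Quotient.mk (MulAction.orbitRel G₂ M₂)))
    (hp₃ : IsSerreFibration (Quotient.mk (MulAction.orbitRel G₃ M₃)))
    (φ : G₂ →* G₃) (hφ : Continuous φ)
    (f : M₂ → M₃) (hequiv : ∀ (g : G₂) (x : M₂), f (g • x) = φ g • f x)
    (hf : IsSerreFibration f)
    (ψ : Quotient (MulAction.orbitRel G₂ M₂) → Quotient (MulAction.orbitRel G₃ M₃))
    (hψ : ∀ x : M₂, ψ (Quotient.mk (MulAction.orbitRel G₂ M₂) x) =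
      Quotient.mk (MulAction.orbitRel G₃ M₃) (f x)) :
    IsSerreFibration ψ :=
  serreFibration_of_descend_to_orbit_spaces_general hp₂ hp₃ f hf ψ hψ
end
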